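/- arXiv:2007.12970 — 3 statements merged into one kernel-verified Lean document; each statement's English description precedes it below -/
import Mathlib

section
/- For every real parameter α with 0 ≤ α ≤ 1/6 there exist constants C ≥ 1 and K ≥ 0 with the following property: for every m₀ there exist an integer m ≥ m₀, a finite set 𝒜 ⊂ ℝ with |𝒜| = m, and a simple graph G on vertex set 𝒜, such that the number of edges of G is at least m^{(8+2α)/5} / (C · (log m)^K) (note (8+2α)/5 = 2 − (2−2α)/5), and |𝒜 +_G 𝒜| + |𝒜 ·_G 𝒜| ≤ C · m^{(6+4α)/5} · (log m)^K (note (6+4α)/5 = 2 − (4−4α)/5). -/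
/-- The set of sums along the edges of a graph `G` on real numbers:
`𝒜 +_G 𝒜 = {a + b : G.Adj a b}`. -/
def sumsAlong (G : SimpleGraph ℝ) : Set ℝ := {x | ∃ a b : ℝ, G.Adj a b ∧ x = a + b}

/-- The set of products along the edges of a graph `G` on real numbers:
`𝒜 ·_G 𝒜 = {a · b : G.Adj a b}`. -/
def prodsAlong (G : SimpleGraph ℝ) : Set ℝ := {x | ∃ a b : ℝ, G.Adj a b ∧ x = a * b}

/-!
For a large `X` put `θ = 2e/(1-e) ≥ 3` and `n ≈ X^θ`. The vertices are the reals `i √(p/q)`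
with `i` a prime in `(X, n]` and `p ≠ q` primes `≤ X` (distinct, since `i² p q' = i'² p' q`
forces `(i, p, q) = (i', p', q')`), and `i √(p/q)` is joined to every `j √(q/p)`. Along an edge
the product is the integer `i j ≤ n²` and the sum is `(i p + j q) / √(p q)`, which takes at most
`(2 n X + 1) X² ≤ 3 n²` values since `X³ ≤ n`. By Chebyshev's bound there are `m ≈ n X²`
vertices and `≈ m n` edges up to logarithmic factors, and `m^e ≈ X^θ ≈ n` because
`(θ + 2) e = θ`: so there are `m^{1+e}` edges and `m^{2e}` sums and products. The theorem is the
case `e = (3 + 2α)/5`.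
-/

namespace SumProductAlongEdges

open Real Finset

lemma log_le_div_of_four_mul_sq_le {x c : ℝ} (hc : 0 < c) (hx : 4 * c ^ 2 ≤ x) :
    log x ≤ x / c := by
  have hx0 : 0 ≤ x := le_trans (by positivity) hx
  have h2c : 2 * c ≤ √x := le_sqrt_of_sq_le (by linarith)
  have hlog : log x ≤ 2 * √x := by
    have := log_le_rpow_div hx0 one_half_pos
    rw [← sqrt_eq_rpow] at this
    linarith
  rw [le_div_iff₀ hc]
  nlinarith [mul_self_sqrt hx0, sqrt_nonneg x]

lemma sqrt_le_div_four_mul_log {x : ℝ} (hx : 2 ^ 16 ≤ x) : √x ≤ x / (4 * log x) := by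
  have hsx : 256 ≤ √x := le_sqrt_of_sq_le (by linarith)
  have hlog : log √x ≤ √x / 8 := log_le_div_of_four_mul_sq_le (by norm_num) (by linarith)
  rw [log_sqrt (by linarith)] at hlog
  rw [le_div_iff₀ (mul_pos four_pos (log_pos (by linarith)))]
  nlinarith [mul_self_sqrt (show 0 ≤ x by linarith)]

lemma four_mul_mul_log_le {X n : ℕ} (hX : 576 ≤ X) (hn : X ^ 3 ≤ n) :
    4 * X * log n ≤ n := by
  have hX' : (576 : ℝ) ≤ X := by exact_mod_cast hX
  have hXX3 : (X : ℝ) ≤ X ^ 3 := le_self_pow₀ (by linarith) (by norm_num)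
  have hn' : (X : ℝ) ^ 3 ≤ n := by exact_mod_cast hn
  have hX3 : exp 1 ≤ (X : ℝ) ^ 3 := by linarith [exp_one_lt_d9]
  have hanti : log n / n ≤ log ((X : ℝ) ^ 3) / (X : ℝ) ^ 3 :=
    log_div_self_antitoneOn hX3 (hX3.trans hn') hn'
  have hlogX : log X ≤ X / 12 := log_le_div_of_four_mul_sq_le (by norm_num) (by linarith)
  have hlogn : 0 ≤ log n := log_nonneg (by linarith)
  rw [log_pow, div_le_div_iff₀ (by linarith) (by positivity)] at hanti
  push_cast at hanti
  have h : log n * X ^ 2 ≤ n / 4 := by nlinarith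
  nlinarith

lemma div_two_mul_log_le_card_primesLE {k : ℕ} (hk : 143 ≤ k) :
    (k : ℝ) / (2 * log k) ≤ #(Nat.primesLE k) := by
  have hk' : (143 : ℝ) ≤ k := by exact_mod_cast hk
  have hlog : log (k + 1) ≤ (k + 1) / 6 :=
    log_le_div_of_four_mul_sq_le (by norm_num) (by linarith)
  rw [Nat.primesLE_card_eq_primeCounting]
  calc (k : ℝ) / (2 * log k) = (k / 2) / log k := by ring
    _ ≤ (k * log 2 - log (k + 1)) / log k :=
      div_le_div_of_nonneg_right (by nlinarith [log_two_gt_d9]) (log_nonneg (by linarith))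
    _ ≤ _ := Chebyshev.pi_ge k

lemma card_primesLE_le (k : ℕ) : #(Nat.primesLE k) ≤ k := by
  rw [Nat.primesLE_eq_filter_Ioc_zero]
  exact (card_filter_le _ _).trans (Nat.card_Ioc 0 k).le

lemma two_le_card_primesLE {X : ℕ} (hX : 576 ≤ X) : 2 ≤ #(Nat.primesLE X) := by
  have hX' : (576 : ℝ) ≤ X := by exact_mod_cast hX
  have hlog : log X ≤ X / 4 := log_le_div_of_four_mul_sq_le (by norm_num) (by linarith)
  have h2 : (2 : ℝ) ≤ X / (2 * log X) := by
    rw [le_div_iff₀ (mul_pos two_pos (log_pos (by linarith)))]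
    linarith
  exact_mod_cast h2.trans (div_two_mul_log_le_card_primesLE (by omega))

def largePrimes (X n : ℕ) : Finset ℕ := Nat.primesLE n \ Nat.primesLE X

lemma mem_largePrimes {X n i : ℕ} : i ∈ largePrimes X n ↔ X < i ∧ i ≤ n ∧ i.Prime := by
  simp only [largePrimes, mem_sdiff, Nat.mem_primesLE]
  constructor
  · rintro ⟨⟨hin, hi⟩, hiX⟩
    exact ⟨not_le.mp fun h => hiX ⟨h, hi⟩, hin, hi⟩
  · rintro ⟨hXi, hin, hi⟩
    exact ⟨⟨hin, hi⟩, fun h => by omega⟩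

lemma div_four_mul_log_le_card_largePrimes {X n : ℕ} (hX : 576 ≤ X) (hn : X ^ 3 ≤ n) :
    (n : ℝ) / (4 * log n) ≤ #(largePrimes X n) := by
  have hXn : X ≤ n := (Nat.le_self_pow (by norm_num) X).trans hn
  have hsplit : (#(largePrimes X n) : ℝ) + #(Nat.primesLE X) = #(Nat.primesLE n) := by
    exact_mod_cast card_sdiff_add_card_eq_card (Nat.primesLE_mono hXn)
  have hcheb := div_two_mul_log_le_card_primesLE (k := n) (by omega)
  have hZ : (#(Nat.primesLE X) : ℝ) ≤ X := by exact_mod_cast card_primesLE_le X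
  have hlogn : 0 < log n := log_pos (by exact_mod_cast (by omega : 1 < n))
  have hXlog : (X : ℝ) ≤ n / (4 * log n) := by
    rw [le_div_iff₀ (by positivity)]
    linarith [four_mul_mul_log_le hX hn]
  have hhalf : (n : ℝ) / (2 * log n) = n / (4 * log n) + n / (4 * log n) := by
    field_simp
    ring
  linarith

theorem _root_.Nat.Prime.eq_of_dvd_sq_mul_mul {r a b c : ℕ} (hr : r.Prime) (ha : a.Prime)
    (hb : b.Prime) (hc : c.Prime) (hra : r ≠ a) (hrb : r ≠ b) (h : r ∣ a ^ 2 * b * c) :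
    r = c := by
  rcases hr.dvd_mul.mp h with h | h
  · rcases hr.dvd_mul.mp h with h | h
    · exact absurd ((Nat.prime_dvd_prime_iff_eq hr ha).mp (hr.dvd_of_dvd_pow h)) hra
    · exact absurd ((Nat.prime_dvd_prime_iff_eq hr hb).mp h) hrb
  · exact (Nat.prime_dvd_prime_iff_eq hr hc).mp h

def vertexIndex (X n : ℕ) : Finset (ℕ × ℕ × ℕ) :=
  largePrimes X n ×ˢ (Nat.primesLE X).offDiag

lemma mem_vertexIndex {X n i p q : ℕ} : (i, p, q) ∈ vertexIndex X n ↔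
    (X < i ∧ i ≤ n ∧ i.Prime) ∧ (p ≤ X ∧ p.Prime) ∧ (q ≤ X ∧ q.Prime) ∧ p ≠ q := by
  simp only [vertexIndex, mem_product, mem_offDiag, mem_largePrimes, Nat.mem_primesLE]

lemma swap_mem_vertexIndex {X n i j p q : ℕ} (ht : (i, p, q) ∈ vertexIndex X n)
    (hj : j ∈ largePrimes X n) : (j, q, p) ∈ vertexIndex X n := by
  obtain ⟨-, hpq⟩ := mem_product.mp ht
  obtain ⟨hp, hq, hpq⟩ := mem_offDiag.mp hpq
  exact mem_product.mpr ⟨hj, mem_offDiag.mpr ⟨hq, hp, hpq.symm⟩⟩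

lemma eq_of_sq_mul_mul_eq {X n i p q i' p' q' : ℕ} (ht : (i, p, q) ∈ vertexIndex X n)
    (ht' : (i', p', q') ∈ vertexIndex X n) (h : i ^ 2 * p * q' = i' ^ 2 * p' * q) :
    i = i' ∧ p = p' ∧ q = q' := by
  obtain ⟨⟨hXi, -, hi⟩, ⟨hpX, hp⟩, ⟨hqX, hq⟩, hpq⟩ := mem_vertexIndex.mp ht
  obtain ⟨⟨hXi', -, hi'⟩, ⟨hp'X, hp'⟩, ⟨hq'X, hq'⟩, hp'q'⟩ := mem_vertexIndex.mp ht'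
  have hqq' : q = q' := hq.eq_of_dvd_sq_mul_mul hi hp hq' (by omega) hpq.symm
    (h ▸ dvd_mul_left q _)
  have hpp' : p' = p := hp'.eq_of_dvd_sq_mul_mul hi hq' hp (by omega) hp'q'
    (by rw [mul_right_comm, h]; exact (dvd_mul_left p' _).mul_right q)
  subst hqq' hpp'
  have hsq : i ^ 2 = i' ^ 2 :=
    Nat.eq_of_mul_eq_mul_right (Nat.mul_pos hp.pos hq.pos) (by simpa only [mul_assoc] using h)
  exact ⟨Nat.pow_left_injective two_ne_zero hsq, rfl, rfl⟩

noncomputable def vertex (t : ℕ × ℕ × ℕ) : ℝ := t.1 * √(t.2.1 / t.2.2)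

lemma vertex_injOn (X n : ℕ) : Set.InjOn vertex (vertexIndex X n) := by
  rintro ⟨i, p, q⟩ ht ⟨i', p', q'⟩ ht' h
  obtain ⟨-, ⟨-, hp⟩, ⟨-, hq⟩, -⟩ := mem_vertexIndex.mp ht
  obtain ⟨-, ⟨-, hp'⟩, ⟨-, hq'⟩, -⟩ := mem_vertexIndex.mp ht'
  have hq0 : (0 : ℝ) < q := by exact_mod_cast hq.pos
  have hq'0 : (0 : ℝ) < q' := by exact_mod_cast hq'.pos
  have hsq : vertex (i, p, q) ^ 2 = vertex (i', p', q') ^ 2 := by rw [h]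
  simp only [vertex] at hsq
  rw [mul_pow, mul_pow, sq_sqrt (by positivity), sq_sqrt (by positivity)] at hsq
  field_simp at hsq
  obtain ⟨rfl, rfl, rfl⟩ := eq_of_sq_mul_mul_eq ht ht' (by
    exact_mod_cast hsq.trans (mul_rotate _ _ _))
  rfl

noncomputable def vertexSet (X n : ℕ) : Finset ℝ := (vertexIndex X n).image vertex

lemma card_vertexSet (X n : ℕ) :
    #(vertexSet X n) = #(largePrimes X n) * #((Nat.primesLE X).offDiag) := by
  rw [vertexSet, card_image_of_injOn (vertex_injOn X n), vertexIndex, card_product]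

lemma cast_card_vertexSet (X n : ℕ) : (#(vertexSet X n) : ℝ) =
    #(largePrimes X n) * ((#(Nat.primesLE X) : ℝ) ^ 2 - #(Nat.primesLE X)) := by
  rw [card_vertexSet, offDiag_card, Nat.cast_mul,
    Nat.cast_sub (Nat.le_mul_self _), Nat.cast_mul, sq]

lemma sqrt_div_eq_div_sqrt_mul {p q : ℝ} (hp : 0 < p) (hq : 0 < q) :
    √(p / q) = p / √(p * q) := by
  rw [eq_div_iff (by positivity), ← sqrt_mul (by positivity),
    show p / q * (p * q) = p ^ 2 by field_simp, sqrt_sq hp.le]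

lemma vertex_add_vertex {i j p q : ℕ} (hp : 0 < p) (hq : 0 < q) :
    vertex (i, p, q) + vertex (j, q, p) = (i * p + j * q : ℕ) / √(p * q : ℕ) := by
  simp only [vertex, sqrt_div_eq_div_sqrt_mul (Nat.cast_pos.mpr hp) (Nat.cast_pos.mpr hq),
    sqrt_div_eq_div_sqrt_mul (Nat.cast_pos.mpr hq) (Nat.cast_pos.mpr hp)]
  push_cast
  rw [mul_comm (q : ℝ) p]
  ring

lemma vertex_mul_vertex {i j p q : ℕ} (hp : 0 < p) (hq : 0 < q) :
    vertex (i, p, q) * vertex (j, q, p) = (i * j : ℕ) := by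
  have h : √((p : ℝ) / q) * √((q : ℝ) / p) = 1 := by
    rw [← sqrt_mul (by positivity), show (p : ℝ) / q * (q / p) = 1 by field_simp, sqrt_one]
  simp only [vertex]
  push_cast
  linear_combination (i * j : ℝ) * h

def sqrtRatioGraph (X n : ℕ) : SimpleGraph ℝ where
  Adj a b := ∃ i j p q : ℕ, (i, p, q) ∈ vertexIndex X n ∧ (j, q, p) ∈ vertexIndex X n ∧
    a = vertex (i, p, q) ∧ b = vertex (j, q, p)
  symm := ⟨fun _ _ ⟨i, j, p, q, ht, ht', ha, hb⟩ => ⟨j, i, q, p, ht', ht, hb, ha⟩⟩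
  loopless := ⟨fun _ ⟨i, j, p, q, ht, ht', ha, hb⟩ => by
    have := vertex_injOn X n ht ht' (ha.symm.trans hb)
    simp only [Prod.mk.injEq] at this
    exact (mem_vertexIndex.mp ht).2.2.2 this.2.1⟩

lemma sqrtRatioGraph_adj {X n : ℕ} {a b : ℝ} : (sqrtRatioGraph X n).Adj a b ↔
    ∃ i j p q : ℕ, (i, p, q) ∈ vertexIndex X n ∧ (j, q, p) ∈ vertexIndex X n ∧
      a = vertex (i, p, q) ∧ b = vertex (j, q, p) :=
  Iff.rfl

lemma sqrtRatioGraph_adj_mem {X n : ℕ} {a b : ℝ} (h : (sqrtRatioGraph X n).Adj a b) :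
    a ∈ vertexSet X n ∧ b ∈ vertexSet X n := by
  obtain ⟨i, j, p, q, ht, ht', rfl, rfl⟩ := sqrtRatioGraph_adj.mp h
  exact ⟨mem_image_of_mem _ ht, mem_image_of_mem _ ht'⟩

lemma sqrtRatioGraph_edgeSet_finite (X n : ℕ) : (sqrtRatioGraph X n).edgeSet.Finite := by
  classical
  apply ((vertexSet X n ×ˢ vertexSet X n).image fun x => s(x.1, x.2)).finite_toSet.subset
  refine Sym2.ind fun a b hab => ?_
  obtain ⟨ha, hb⟩ := sqrtRatioGraph_adj_mem hab
  exact mem_image_of_mem _ (mem_product.mpr ⟨ha, hb⟩)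

lemma _root_.Set.ncard_le_card_of_subset_image {α β : Type*} [DecidableEq β] {s : Set β}
    {t : Finset α} {f : α → β} (h : s ⊆ t.image f) : s.ncard ≤ #t :=
  (Set.ncard_le_ncard h (t.image f).finite_toSet).trans
    ((Set.ncard_coe_finset _).trans_le card_image_le)

lemma ncard_sumsAlong_le (X n : ℕ) :
    (sumsAlong (sqrtRatioGraph X n)).ncard ≤ (2 * n * X + 1) * #(Nat.primesLE X) ^ 2 := by
  classical
  have hsub : sumsAlong (sqrtRatioGraph X n) ⊆
      (range (2 * n * X + 1) ×ˢ Nat.primesLE X ×ˢ Nat.primesLE X).image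
        fun t => (t.1 : ℝ) / √(t.2.1 * t.2.2 : ℕ) := by
    rintro _ ⟨a, b, hab, rfl⟩
    obtain ⟨i, j, p, q, ht, ht', rfl, rfl⟩ := sqrtRatioGraph_adj.mp hab
    obtain ⟨⟨-, hin, -⟩, ⟨hpX, hp⟩, ⟨hqX, hq⟩, -⟩ := mem_vertexIndex.mp ht
    obtain ⟨⟨-, hjn, -⟩, -⟩ := mem_vertexIndex.mp ht'
    have hsum : i * p + j * q < 2 * n * X + 1 := by
      nlinarith [Nat.mul_le_mul hin hpX, Nat.mul_le_mul hjn hqX]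
    refine mem_image.mpr ⟨(i * p + j * q, p, q), ?_, (vertex_add_vertex hp.pos hq.pos).symm⟩
    simp only [mem_product, mem_range, Nat.mem_primesLE]
    exact ⟨hsum, ⟨hpX, hp⟩, hqX, hq⟩
  refine (Set.ncard_le_card_of_subset_image hsub).trans_eq ?_
  rw [card_product, card_product, card_range, sq]

lemma ncard_prodsAlong_le (X n : ℕ) :
    (prodsAlong (sqrtRatioGraph X n)).ncard ≤ n ^ 2 + 1 := by
  have hsub : prodsAlong (sqrtRatioGraph X n) ⊆ (range (n ^ 2 + 1)).image ((↑) : ℕ → ℝ) := by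
    rintro _ ⟨a, b, hab, rfl⟩
    obtain ⟨i, j, p, q, ht, ht', rfl, rfl⟩ := sqrtRatioGraph_adj.mp hab
    obtain ⟨⟨-, hin, -⟩, ⟨-, hp⟩, ⟨-, hq⟩, -⟩ := mem_vertexIndex.mp ht
    obtain ⟨⟨-, hjn, -⟩, -⟩ := mem_vertexIndex.mp ht'
    refine mem_image.mpr ⟨i * j, mem_range.mpr ?_, (vertex_mul_vertex hp.pos hq.pos).symm⟩
    nlinarith [Nat.mul_le_mul hin hjn]
  exact (Set.ncard_le_card_of_subset_image hsub).trans_eq (card_range _)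

lemma ncard_sumsAlong_add_ncard_prodsAlong_le {X n : ℕ} (hX : 1 ≤ X) (hn : X ^ 3 ≤ n) :
    (sumsAlong (sqrtRatioGraph X n)).ncard + (prodsAlong (sqrtRatioGraph X n)).ncard ≤
      5 * n ^ 2 := by
  have hZ := Nat.pow_le_pow_left (card_primesLE_le X) 2
  have hs := (ncard_sumsAlong_le X n).trans (Nat.mul_le_mul_left (2 * n * X + 1) hZ)
  have hp := ncard_prodsAlong_le X n
  have hX2 : X ^ 2 ≤ n := (Nat.pow_le_pow_right hX (by norm_num)).trans hn
  have hnX3 : n * X ^ 3 ≤ n ^ 2 := by rw [sq]; exact Nat.mul_le_mul_left n hn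
  have hn1 : 1 ≤ n := le_trans (Nat.one_le_pow _ _ hX) hX2
  nlinarith

lemma card_largePrimes_mul_card_vertexSet_le (X n : ℕ) :
    #(largePrimes X n) * #(vertexSet X n) ≤ 2 * (sqrtRatioGraph X n).edgeSet.ncard := by
  classical
  set D := vertexIndex X n ×ˢ largePrimes X n
  let edge : (ℕ × ℕ × ℕ) × ℕ → Sym2 ℝ := fun u => s(vertex u.1, vertex (u.2, u.1.2.2, u.1.2.1))
  have hsub : ↑(D.image edge) ⊆ (sqrtRatioGraph X n).edgeSet := by
    intro e he
    obtain ⟨⟨⟨i, p, q⟩, j⟩, hu, rfl⟩ := mem_image.mp he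
    obtain ⟨ht, hj⟩ := mem_product.mp hu
    exact ⟨i, j, p, q, ht, swap_mem_vertexIndex ht hj, rfl, rfl⟩
  have hfiber : ∀ e ∈ D.image edge, #{w ∈ D | edge w = e} ≤ 2 := by
    intro e he
    obtain ⟨⟨⟨i, p, q⟩, j⟩, hu, rfl⟩ := mem_image.mp he
    obtain ⟨ht, hj⟩ := mem_product.mp hu
    refine (card_le_card fun w hw => ?_).trans
      (card_le_two (a := ((i, p, q), j)) (b := ((j, q, p), i)))
    obtain ⟨hwD, hwe⟩ := mem_filter.mp hw
    obtain ⟨⟨i', p', q'⟩, j'⟩ := w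
    obtain ⟨ht', hj'⟩ := mem_product.mp hwD
    have inj := vertex_injOn X n
    rcases Sym2.eq_iff.mp hwe with ⟨h1, h2⟩ | ⟨h1, h2⟩
    · have e1 := inj ht' ht h1
      have e2 := inj (swap_mem_vertexIndex ht' hj') (swap_mem_vertexIndex ht hj) h2
      simp only [Prod.mk.injEq] at e1 e2
      simp [e1, e2]
    · have e1 := inj ht' (swap_mem_vertexIndex ht hj) h1
      have e2 := inj (swap_mem_vertexIndex ht' hj') ht h2
      simp only [Prod.mk.injEq] at e1 e2
      simp [e1, e2]
  calc #(largePrimes X n) * #(vertexSet X n)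
      = #D := by rw [card_vertexSet, card_product, vertexIndex, card_product, mul_comm]
    _ ≤ 2 * #(D.image edge) := card_le_mul_card_image _ 2 hfiber
    _ ≤ 2 * (sqrtRatioGraph X n).edgeSet.ncard := by
      rw [← Set.ncard_coe_finset]
      exact Nat.mul_le_mul_left 2 (Set.ncard_le_ncard hsub (sqrtRatioGraph_edgeSet_finite X n))

lemma le_mul_log_card_vertexSet {X n : ℕ} (hX : 2 ^ 16 ≤ X) (hn : X ^ 3 ≤ n) :
    1 ≤ log (#(vertexSet X n) : ℝ) ∧ (X : ℝ) ≤ #(vertexSet X n) ∧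
      (n : ℝ) ≤ 8 * log (#(vertexSet X n) : ℝ) * #(largePrimes X n) ∧
      (X : ℝ) ≤ 4 * log (#(vertexSet X n) : ℝ) * #(Nat.primesLE X) := by
  have hX' : (2 ^ 16 : ℝ) ≤ X := by exact_mod_cast hX
  have hn' : (X : ℝ) ^ 3 ≤ n := by exact_mod_cast hn
  have hXX3 : (X : ℝ) ^ 2 ≤ X ^ 3 := pow_le_pow_right₀ (by linarith) (by norm_num)
  have hn16 : (2 ^ 16 : ℝ) ≤ n := by nlinarith
  have hn0 : (0 : ℝ) < n := by positivity
  have hm := cast_card_vertexSet X n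
  have hZ2 : (2 : ℝ) ≤ #(Nat.primesLE X) := by
    exact_mod_cast two_le_card_primesLE (X := X) (by omega)
  have hN := div_four_mul_log_le_card_largePrimes (X := X) (by omega) hn
  have hZ := div_two_mul_log_le_card_primesLE (k := X) (by omega)
  set m : ℝ := (#(vertexSet X n) : ℝ)
  set N : ℝ := (#(largePrimes X n) : ℝ)
  set Z : ℝ := (#(Nat.primesLE X) : ℝ)
  have hsqrtN : √n ≤ N := (sqrt_le_div_four_mul_log hn16).trans hN
  have hN0 : 0 ≤ N := (sqrt_nonneg _).trans hsqrtN
  have hNm : N ≤ m := by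
    rw [hm]
    nlinarith [mul_le_mul_of_nonneg_left (by nlinarith : 1 ≤ Z ^ 2 - Z) hN0]
  have hXm : (X : ℝ) ≤ m := (le_sqrt_of_sq_le (by linarith)).trans (hsqrtN.trans hNm)
  have hL1 : 1 ≤ log m := (le_log_iff_exp_le (by linarith)).mpr (by linarith [exp_one_lt_d9])
  have hlogn : log n ≤ 2 * log m := by
    have := log_le_log (sqrt_pos.mpr hn0) (hsqrtN.trans hNm)
    rw [log_sqrt hn0.le] at this
    linarith
  have hlogX : log X ≤ log n := log_le_log (by linarith) (by nlinarith)
  rw [div_le_iff₀ (mul_pos four_pos (log_pos (by linarith)))] at hN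
  rw [div_le_iff₀ (mul_pos two_pos (log_pos (by linarith)))] at hZ
  refine ⟨hL1, hXm, ?_, ?_⟩ <;> nlinarith

lemma sqrtRatioGraph_bounds {X n : ℕ} (hX : 2 ^ 16 ≤ X) (hn : X ^ 3 ≤ n) :
    (#(vertexSet X n) : ℝ) ≤ n * X ^ 2 ∧
      n * X ^ 2 ≤ 256 * log (#(vertexSet X n) : ℝ) ^ 3 * #(vertexSet X n) ∧
      #(vertexSet X n) * n ≤
        16 * log (#(vertexSet X n) : ℝ) * (sqrtRatioGraph X n).edgeSet.ncard := by
  obtain ⟨hL1, -, hnN, hXZ⟩ := le_mul_log_card_vertexSet hX hn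
  have hm := cast_card_vertexSet X n
  have hZ2 : (2 : ℝ) ≤ #(Nat.primesLE X) := by
    exact_mod_cast two_le_card_primesLE (X := X) (by omega)
  have hZX : (#(Nat.primesLE X) : ℝ) ≤ X := by exact_mod_cast card_primesLE_le X
  have hNn : (#(largePrimes X n) : ℝ) ≤ n := by
    exact_mod_cast (card_le_card sdiff_subset).trans (card_primesLE_le n)
  have hE : (#(largePrimes X n) : ℝ) * #(vertexSet X n) ≤
      2 * (sqrtRatioGraph X n).edgeSet.ncard := by
    exact_mod_cast card_largePrimes_mul_card_vertexSet_le X n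
  set m : ℝ := (#(vertexSet X n) : ℝ)
  set N : ℝ := (#(largePrimes X n) : ℝ)
  set Z : ℝ := (#(Nat.primesLE X) : ℝ)
  set L := log m
  refine ⟨?_, ?_, ?_⟩
  · rw [hm]
    exact mul_le_mul hNn (by nlinarith) (by nlinarith) (Nat.cast_nonneg n)
  · calc (n : ℝ) * X ^ 2 ≤ (8 * L * N) * (4 * L * Z) ^ 2 := by gcongr
      _ = 128 * L ^ 3 * (N * Z ^ 2) := by ring
      _ ≤ 128 * L ^ 3 * (2 * m) := by
        refine mul_le_mul_of_nonneg_left ?_ (by positivity)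
        rw [hm]
        nlinarith [mul_le_mul_of_nonneg_left (by nlinarith : Z ^ 2 ≤ 2 * (Z ^ 2 - Z))
          (Nat.cast_nonneg _ : (0 : ℝ) ≤ N)]
      _ = 256 * L ^ 3 * m := by ring
  · calc m * n ≤ m * (8 * L * N) := by gcongr
      _ = 8 * L * (N * m) := by ring
      _ ≤ 8 * L * (2 * (sqrtRatioGraph X n).edgeSet.ncard) := by gcongr
      _ = 16 * L * (sqrtRatioGraph X n).edgeSet.ncard := by ring

lemma rpow_mul_sq_eq {x θ e : ℝ} (hx : 0 < x) (hθe : (θ + 2) * e = θ) :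
    (x ^ θ * x ^ 2) ^ e = x ^ θ := by
  rw [← rpow_two, ← rpow_add hx, ← rpow_mul hx.le, hθe]

lemma rpow_le_two_mul {x n m θ e : ℝ} (hx : 0 < x) (he0 : 0 ≤ e) (he1 : e ≤ 1)
    (hθe : (θ + 2) * e = θ) (hn : x ^ θ ≤ n) (hn' : n ≤ 2 * x ^ θ) (hm0 : 0 ≤ m)
    (hm : m ≤ n * x ^ 2) : m ^ e ≤ 2 * n :=
  calc m ^ e ≤ (2 * (x ^ θ * x ^ 2)) ^ e := by
        gcongr
        nlinarith [mul_le_mul_of_nonneg_right hn' (sq_nonneg x)]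
    _ = 2 ^ e * x ^ θ := by rw [mul_rpow (by norm_num) (by positivity), rpow_mul_sq_eq hx hθe]
    _ ≤ 2 * n := by
        gcongr
        exact rpow_le_self_of_one_le one_le_two he1

lemma sq_le_mul_rpow {x n m B θ e : ℝ} (hx : 0 < x) (he0 : 0 ≤ e) (he1 : e ≤ 1)
    (hθe : (θ + 2) * e = θ) (hn : x ^ θ ≤ n) (hn' : n ≤ 2 * x ^ θ) (hm0 : 0 ≤ m) (hB : 1 ≤ B)
    (hm : n * x ^ 2 ≤ B * m) : n ^ 2 ≤ 4 * B ^ 2 * m ^ (2 * e) := by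
  have hy : x ^ θ ≤ B ^ e * m ^ e := by
    rw [← mul_rpow (by positivity) hm0, ← rpow_mul_sq_eq hx hθe]
    exact rpow_le_rpow (by positivity)
      ((mul_le_mul_of_nonneg_right hn (sq_nonneg x)).trans hm) he0
  have hBe : B ^ e ≤ B := rpow_le_self_of_one_le hB he1
  calc n ^ 2 ≤ (2 * x ^ θ) ^ 2 := by gcongr; exact (rpow_nonneg hx.le θ).trans hn
    _ ≤ (2 * (B * m ^ e)) ^ 2 := by gcongr; exact hy.trans (by gcongr)
    _ = 4 * B ^ 2 * m ^ (2 * e) := by rw [mul_comm 2 e, rpow_mul hm0, rpow_two]; ring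

lemma exists_nat_between_rpow {θ : ℝ} (hθ : 3 ≤ θ) {X : ℕ} (hX : 1 ≤ X) :
    ∃ n : ℕ, X ^ 3 ≤ n ∧ (X : ℝ) ^ θ ≤ n ∧ (n : ℝ) ≤ 2 * (X : ℝ) ^ θ := by
  have hX' : (1 : ℝ) ≤ X := by exact_mod_cast hX
  have hn : (X : ℝ) ^ θ ≤ ⌈(X : ℝ) ^ θ⌉₊ := Nat.le_ceil _
  refine ⟨⌈(X : ℝ) ^ θ⌉₊, ?_, hn, ?_⟩
  · have h3 : (X : ℝ) ^ (3 : ℝ) ≤ X ^ θ := rpow_le_rpow_of_exponent_le hX' hθ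
    rw [rpow_ofNat] at h3
    exact_mod_cast h3.trans hn
  · linarith [Nat.ceil_lt_add_one (rpow_nonneg (zero_le_one.trans hX') θ),
      one_le_rpow hX' (by linarith : 0 ≤ θ)]

theorem exists_graph_many_edges_few_sums_prods {e : ℝ} (he : 3 / 5 ≤ e) (he1 : e < 1) :
    ∃ C K : ℝ, 1 ≤ C ∧ 0 ≤ K ∧ ∀ m₀ : ℕ, ∃ m : ℕ, m₀ ≤ m ∧
      ∃ (𝒜 : Finset ℝ) (G : SimpleGraph ℝ), 𝒜.card = m ∧
        (∀ a b : ℝ, G.Adj a b → a ∈ 𝒜 ∧ b ∈ 𝒜) ∧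
        (m : ℝ) ^ (1 + e) / (C * log m ^ K) ≤ (G.edgeSet.ncard : ℝ) ∧
        ((sumsAlong G).ncard + (prodsAlong G).ncard : ℝ) ≤ C * (m : ℝ) ^ (2 * e) * log m ^ K := by
  refine ⟨2 ^ 21, 6, by norm_num, by norm_num, fun m₀ => ?_⟩
  set θ := 2 * e / (1 - e) with hθ
  have hθ3 : 3 ≤ θ := by rw [hθ, le_div_iff₀ (by linarith)]; linarith
  have hθe : (θ + 2) * e = θ := by
    have : 1 - e ≠ 0 := (by linarith : 0 < 1 - e).ne'
    rw [hθ]; field_simp; ring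
  set X := max m₀ (2 ^ 16)
  have hX : 2 ^ 16 ≤ X := le_max_right _ _
  obtain ⟨n, hX3n, hn, hn'⟩ := exists_nat_between_rpow hθ3 (by omega : 1 ≤ X)
  obtain ⟨hL1, hXm, -, -⟩ := le_mul_log_card_vertexSet hX hX3n
  obtain ⟨hm_le, hm_ge, hE⟩ := sqrtRatioGraph_bounds hX hX3n
  have hsp := ncard_sumsAlong_add_ncard_prodsAlong_le (by omega : 1 ≤ X) hX3n
  have hmX : m₀ ≤ #(vertexSet X n) := (le_max_left _ _).trans (by exact_mod_cast hXm)
  set m : ℝ := (#(vertexSet X n) : ℝ)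
  set L := log m
  have hx0 : (0 : ℝ) < X := by exact_mod_cast (by omega : 0 < X)
  have hme := rpow_le_two_mul hx0 (by linarith) he1.le hθe hn hn' (by positivity) hm_le
  have hn2 := sq_le_mul_rpow hx0 (by linarith) he1.le hθe hn hn' (by positivity)
    (by nlinarith : 1 ≤ 256 * L ^ 3) hm_ge
  have hL6 : L ≤ L ^ 6 := le_self_pow₀ hL1 (by norm_num)
  refine ⟨#(vertexSet X n), hmX, vertexSet X n, sqrtRatioGraph X n, rfl,
    fun a b h => sqrtRatioGraph_adj_mem h, ?_, ?_⟩
  · rw [rpow_ofNat, div_le_iff₀ (by positivity), rpow_add (by linarith), rpow_one]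
    calc m * m ^ e ≤ m * (2 * n) := by gcongr
      _ = 2 * (m * n) := by ring
      _ ≤ 2 * (16 * L * (sqrtRatioGraph X n).edgeSet.ncard) := by gcongr
      _ ≤ (sqrtRatioGraph X n).edgeSet.ncard * (2 ^ 21 * L ^ 6) := by
        nlinarith [(Nat.cast_nonneg _ : (0 : ℝ) ≤ (sqrtRatioGraph X n).edgeSet.ncard)]
  · rw [rpow_ofNat]
    calc ((sumsAlong (sqrtRatioGraph X n)).ncard + (prodsAlong (sqrtRatioGraph X n)).ncard : ℝ)
        ≤ 5 * n ^ 2 := by exact_mod_cast hsp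
      _ ≤ 5 * (4 * (256 * L ^ 3) ^ 2 * m ^ (2 * e)) := by gcongr
      _ ≤ 2 ^ 21 * m ^ (2 * e) * L ^ 6 := by
        nlinarith [rpow_nonneg (Nat.cast_nonneg _ : (0 : ℝ) ≤ m) (2 * e)]

end SumProductAlongEdges

/-- Theorem 1 of the paper: for every `0 ≤ α ≤ 1/6` there are, for arbitrarily
large `m`, a set `𝒜` of `m` reals and a graph `G` on `𝒜` with
`Ω̃(m^{(8+2α)/5})` edges such that `|𝒜 +_G 𝒜| + |𝒜 ·_G 𝒜| = Õ(m^{(6+4α)/5})`. -/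
theorem sum_product_along_edges_reals (α : ℝ) (hα0 : 0 ≤ α) (hα1 : α ≤ 1/6) :
    ∃ C K : ℝ, 1 ≤ C ∧ 0 ≤ K ∧ ∀ m₀ : ℕ, ∃ m : ℕ, m₀ ≤ m ∧
      ∃ (𝒜 : Finset ℝ) (G : SimpleGraph ℝ),
        𝒜.card = m ∧
        (∀ a b : ℝ, G.Adj a b → a ∈ 𝒜 ∧ b ∈ 𝒜) ∧
        (m : ℝ) ^ ((8 + 2*α)/5) / (C * (Real.log m) ^ K) ≤ (G.edgeSet.ncard : ℝ) ∧
        ((sumsAlong G).ncard + (prodsAlong G).ncard : ℝ) ≤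
          C * (m : ℝ) ^ ((6 + 4*α)/5) * (Real.log m) ^ K := by
  rw [show (8 + 2*α)/5 = 1 + (3 + 2*α)/5 by ring, show (6 + 4*α)/5 = 2 * ((3 + 2*α)/5) by ring]
  exact SumProductAlongEdges.exists_graph_many_edges_few_sums_prods (by linarith) (by linarith)
end

section
/- There exist real constants c > 0 and ε > 0 such that for every n₀ there exist an integer n ≥ n₀, a finite set 𝒜 ⊂ ℝ with |𝒜| = n, and a simple graph G on vertex set 𝒜 with at least n^{1+c} edges, for which |𝒜 +_G 𝒜| + |𝒜 ·_G 𝒜| < n^{1+c−ε}. In other words, the Strong Erdős–Szemerédi Conjecture is false. -/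
/-!
Take `M = K T` and the vertices `q (M + t)` and `-(M + s) / q` for `1 ≤ q ≤ K` and `0 ≤ s, t < T`,
joining two of them when they share `q`. The choice of `M` makes `q (M + t)` determine `q` and `t`,
so there are `2 K T` vertices and `K T²` edges. The product along the edge `(q, t, s)` is
`-(M + t) (M + s)`, which forgets `q`, and the sum is `((q² - 1) M + q² t - s) / q`, one of
`(K² + 1) T` numbers for each `q`. With `T = K⁴` there are `n = 2 K⁵` vertices and `K⁹ ≥ n^(7/4)`
edges once `K ≥ 2⁷`, but at most `3 K⁸ < n^(17/10)` sums and products.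
-/

open Finset

namespace ErdosSzemeredi

section GraphOfPairs

variable {ι : Type*}

def graphOfPairs (P : Finset ι) (f g : ι → ℝ) : SimpleGraph ℝ :=
  SimpleGraph.fromEdgeSet ((fun p => s(f p, g p)) '' P)

variable {P : Finset ι} {f g : ι → ℝ}

lemma exists_of_adj_graphOfPairs {a b : ℝ} (h : (graphOfPairs P f g).Adj a b) :
    ∃ p ∈ P, a = f p ∧ b = g p ∨ a = g p ∧ b = f p := by
  obtain ⟨⟨p, hp, hab⟩, -⟩ := h
  exact ⟨p, hp, by rcases Sym2.eq_iff.mp hab with ⟨h₁, h₂⟩ | ⟨h₁, h₂⟩ <;> simp [h₁, h₂]⟩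

lemma mem_of_adj_graphOfPairs {A : Finset ℝ} (hA : ∀ p ∈ P, f p ∈ A ∧ g p ∈ A) {a b : ℝ}
    (h : (graphOfPairs P f g).Adj a b) : a ∈ A ∧ b ∈ A := by
  obtain ⟨p, hp, ⟨rfl, rfl⟩ | ⟨rfl, rfl⟩⟩ := exists_of_adj_graphOfPairs h
  exacts [hA p hp, (hA p hp).symm]

lemma ncard_edgeSet_graphOfPairs (hfg : ∀ p ∈ P, ∀ p' ∈ P, f p ≠ g p')
    (hinj : Set.InjOn (fun p => (f p, g p)) P) : (graphOfPairs P f g).edgeSet.ncard = #P := by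
  have hdiag : Disjoint ((fun p => s(f p, g p)) '' P) Sym2.diagSet := by
    rw [Set.disjoint_left]
    rintro _ ⟨p, hp, rfl⟩ hdiag
    exact hfg p hp p hp (Sym2.mk_isDiag_iff.mp hdiag)
  have hinj' : Set.InjOn (fun p => s(f p, g p)) P := by
    intro p hp p' hp' h
    rcases Sym2.eq_iff.mp h with ⟨h₁, h₂⟩ | ⟨h₁, -⟩
    · exact hinj hp hp' (Prod.ext h₁ h₂)
    · exact absurd h₁ (hfg p hp p' hp')
  rw [graphOfPairs, SimpleGraph.edgeSet_fromEdgeSet, sdiff_eq_left.mpr hdiag, hinj'.ncard_image,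
    Set.ncard_coe_finset]

lemma ncard_sumsAlong_graphOfPairs_le {S : Finset ℝ} (hS : ∀ p ∈ P, f p + g p ∈ S) :
    (sumsAlong (graphOfPairs P f g)).ncard ≤ #S := by
  refine (Set.ncard_le_ncard ?_ S.finite_toSet).trans (Set.ncard_coe_finset S).le
  rintro _ ⟨a, b, hab, rfl⟩
  obtain ⟨p, hp, ⟨rfl, rfl⟩ | ⟨rfl, rfl⟩⟩ := exists_of_adj_graphOfPairs hab
  exacts [hS p hp, add_comm (f p) (g p) ▸ hS p hp]

lemma ncard_prodsAlong_graphOfPairs_le {S : Finset ℝ} (hS : ∀ p ∈ P, f p * g p ∈ S) :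
    (prodsAlong (graphOfPairs P f g)).ncard ≤ #S := by
  refine (Set.ncard_le_ncard ?_ S.finite_toSet).trans (Set.ncard_coe_finset S).le
  rintro _ ⟨a, b, hab, rfl⟩
  obtain ⟨p, hp, ⟨rfl, rfl⟩ | ⟨rfl, rfl⟩⟩ := exists_of_adj_graphOfPairs hab
  exacts [hS p hp, mul_comm (f p) (g p) ▸ hS p hp]

end GraphOfPairs

lemma eq_of_mul_add_eq_mul_add {M q q' t t' : ℕ} (ht : q * t < M) (ht' : q' * t' < M)
    (h : q * (M + t) = q' * (M + t')) : q = q' := by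
  by_contra hne
  rcases Nat.lt_or_gt_of_ne hne with hlt | hlt <;> nlinarith

variable (K T : ℕ)

def vertexIndices : Finset (ℕ × ℕ) := Icc 1 K ×ˢ range T

def leftVertex (x : ℕ × ℕ) : ℝ := x.1 * (K * T + x.2)

noncomputable def rightVertex (x : ℕ × ℕ) : ℝ := -((K * T + x.2) / x.1)

variable {K T}

lemma mem_vertexIndices {q t : ℕ} : (q, t) ∈ vertexIndices K T ↔ (1 ≤ q ∧ q ≤ K) ∧ t < T := by
  simp [vertexIndices]

lemma eq_and_eq_of_mul_add_eq_mul_add {q q' t t' : ℕ} (hq : 0 < q) (hqK : q ≤ K) (hq'K : q' ≤ K)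
    (ht : t < T) (ht' : t' < T) (heq : (q : ℝ) * (K * T + t) = q' * (K * T + t')) :
    q = q' ∧ t = t' := by
  have heq : q * (K * T + t) = q' * (K * T + t') := by exact_mod_cast heq
  obtain rfl := eq_of_mul_add_eq_mul_add (Nat.mul_lt_mul_of_le_of_lt hqK ht (by omega))
    (Nat.mul_lt_mul_of_le_of_lt hq'K ht' (by omega)) heq
  exact ⟨rfl, by simpa using Nat.eq_of_mul_eq_mul_left hq heq⟩

lemma injOn_leftVertex : Set.InjOn (leftVertex K T) (vertexIndices K T) := by
  rintro ⟨q, t⟩ h ⟨q', t'⟩ h' heq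
  obtain ⟨⟨hq, hqK⟩, ht⟩ := mem_vertexIndices.mp h
  obtain ⟨⟨-, hq'K⟩, ht'⟩ := mem_vertexIndices.mp h'
  obtain ⟨rfl, rfl⟩ := eq_and_eq_of_mul_add_eq_mul_add hq hqK hq'K ht ht' heq
  rfl

lemma injOn_rightVertex : Set.InjOn (rightVertex K T) (vertexIndices K T) := by
  rintro ⟨q, s⟩ h ⟨q', s'⟩ h' heq
  obtain ⟨⟨hq, hqK⟩, hs⟩ := mem_vertexIndices.mp h
  obtain ⟨⟨hq', hq'K⟩, hs'⟩ := mem_vertexIndices.mp h'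
  have hq0 : (q : ℝ) ≠ 0 := by positivity
  have hq'0 : (q' : ℝ) ≠ 0 := by positivity
  simp only [rightVertex, neg_inj, div_eq_div_iff hq0 hq'0] at heq
  obtain ⟨rfl, rfl⟩ := eq_and_eq_of_mul_add_eq_mul_add hq' hq'K hqK hs hs' (by linarith)
  rfl

lemma card_vertexIndices : #(vertexIndices K T) = K * T := by
  rw [vertexIndices, card_product, Nat.card_Icc, card_range, Nat.add_sub_cancel]

lemma mul_add_pos_of_mem_vertexIndices {q t : ℕ} (h : (q, t) ∈ vertexIndices K T) : (0 : ℝ) < K * T + t := by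
  obtain ⟨⟨hq, hqK⟩, ht⟩ := mem_vertexIndices.mp h
  have hKT : (0 : ℝ) < K * T := by exact_mod_cast Nat.mul_pos (by omega) (by omega)
  positivity

lemma leftVertex_pos {x : ℕ × ℕ} (hx : x ∈ vertexIndices K T) : 0 < leftVertex K T x := by
  have hq : (0 : ℝ) < x.1 := by exact_mod_cast (mem_vertexIndices.mp hx).1.1
  exact mul_pos hq (mul_add_pos_of_mem_vertexIndices hx)

lemma rightVertex_neg {x : ℕ × ℕ} (hx : x ∈ vertexIndices K T) : rightVertex K T x < 0 := by
  have hq : (0 : ℝ) < x.1 := by exact_mod_cast (mem_vertexIndices.mp hx).1.1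
  exact neg_neg_of_pos (div_pos (mul_add_pos_of_mem_vertexIndices hx) hq)

variable (K T)

noncomputable def vertices : Finset ℝ :=
  (vertexIndices K T).image (leftVertex K T) ∪ (vertexIndices K T).image (rightVertex K T)

def edgeIndices : Finset (ℕ × ℕ × ℕ) := Icc 1 K ×ˢ range T ×ˢ range T

noncomputable def graph : SimpleGraph ℝ :=
  graphOfPairs (edgeIndices K T) (fun p => leftVertex K T (p.1, p.2.1))
    (fun p => rightVertex K T (p.1, p.2.2))

variable {K T}

lemma mem_edgeIndices {q t s : ℕ} :
    (q, t, s) ∈ edgeIndices K T ↔ (q, t) ∈ vertexIndices K T ∧ (q, s) ∈ vertexIndices K T := by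
  simp only [edgeIndices, vertexIndices, mem_product]
  tauto

lemma card_vertices : #(vertices K T) = 2 * K * T := by
  have hdisj : Disjoint ((vertexIndices K T).image (leftVertex K T))
      ((vertexIndices K T).image (rightVertex K T)) := by
    simp only [disjoint_left, mem_image]
    rintro _ ⟨x, hx, rfl⟩ ⟨y, hy, hxy⟩
    exact (rightVertex_neg hy).not_gt (hxy ▸ leftVertex_pos hx)
  rw [vertices, card_union_of_disjoint hdisj, card_image_of_injOn injOn_leftVertex,
    card_image_of_injOn injOn_rightVertex, card_vertexIndices]
  ring

lemma mem_vertices_of_adj_graph {a b : ℝ} (h : (graph K T).Adj a b) :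
    a ∈ vertices K T ∧ b ∈ vertices K T := by
  refine mem_of_adj_graphOfPairs (fun ⟨q, t, s⟩ hp => ?_) h
  obtain ⟨ht, hs⟩ := mem_edgeIndices.mp hp
  exact ⟨mem_union_left _ (mem_image_of_mem _ ht), mem_union_right _ (mem_image_of_mem _ hs)⟩

lemma ncard_edgeSet_graph : (graph K T).edgeSet.ncard = K * T ^ 2 := by
  rw [graph, ncard_edgeSet_graphOfPairs, edgeIndices, card_product, card_product, Nat.card_Icc,
    card_range, Nat.add_sub_cancel]
  · ring
  · rintro ⟨q, t, s⟩ hp ⟨q', t', s'⟩ hp' hfg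
    exact (rightVertex_neg (mem_edgeIndices.mp hp').2).not_gt
      (hfg ▸ leftVertex_pos (mem_edgeIndices.mp hp).1)
  · rintro ⟨q, t, s⟩ hp ⟨q', t', s'⟩ hp' h
    obtain ⟨hl, hr⟩ := Prod.ext_iff.mp h
    obtain ⟨rfl, rfl⟩ := Prod.ext_iff.mp
      (injOn_leftVertex (mem_edgeIndices.mp hp).1 (mem_edgeIndices.mp hp').1 hl)
    obtain ⟨-, rfl⟩ := Prod.ext_iff.mp
      (injOn_rightVertex (mem_edgeIndices.mp hp).2 (mem_edgeIndices.mp hp').2 hr)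
    rfl

lemma ncard_sumsAlong_graph_le : (sumsAlong (graph K T)).ncard ≤ K * (K ^ 2 + 1) * T := by
  let S := (Icc 1 K ×ˢ Ico (-T : ℤ) (K ^ 2 * T)).image
    fun x : ℕ × ℤ => (((x.1 : ℝ) ^ 2 - 1) * (K * T) + x.2) / x.1
  have hS : #S ≤ K * (K ^ 2 + 1) * T := by
    refine card_image_le.trans_eq ?_
    have hIco : ((K : ℤ) ^ 2 * T - -T).toNat = (K ^ 2 + 1) * T := by
      rw [← Int.toNat_natCast ((K ^ 2 + 1) * T)]
      push_cast
      ring_nf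
    rw [card_product, Nat.card_Icc, Int.card_Ico, Nat.add_sub_cancel, hIco, mul_assoc]
  refine (ncard_sumsAlong_graphOfPairs_le fun ⟨q, t, s⟩ hp => ?_).trans hS
  obtain ⟨⟨⟨hq, hqK⟩, ht⟩, -, hs⟩ := And.imp mem_vertexIndices.mp mem_vertexIndices.mp (mem_edgeIndices.mp hp)
  refine mem_image.mpr ⟨(q, (q : ℤ) ^ 2 * t - s), ?_, ?_⟩
  · simp only [mem_product, mem_Icc, mem_Ico]
    have hs' : (s : ℤ) < T := by exact_mod_cast hs
    have hlt : (q : ℤ) ^ 2 * t < K ^ 2 * T := by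
      have : q ^ 2 * t < K ^ 2 * T :=
        Nat.mul_lt_mul_of_le_of_lt (Nat.pow_le_pow_left hqK 2) ht (pow_pos (by omega) 2)
      exact_mod_cast this
    have hnonneg : 0 ≤ (q : ℤ) ^ 2 * t := by positivity
    exact ⟨⟨hq, hqK⟩, by omega, by omega⟩
  · have hq0 : (q : ℝ) ≠ 0 := by positivity
    simp only [leftVertex, rightVertex]
    push_cast
    field_simp
    ring

lemma ncard_prodsAlong_graph_le : (prodsAlong (graph K T)).ncard ≤ T ^ 2 := by
  let S := (range T ×ˢ range T).image fun x : ℕ × ℕ => -(((K * T + x.1) * (K * T + x.2) : ℝ))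
  have hS : #S ≤ T ^ 2 := card_image_le.trans_eq (by rw [card_product, card_range, sq])
  refine (ncard_prodsAlong_graphOfPairs_le fun ⟨q, t, s⟩ hp => ?_).trans hS
  obtain ⟨⟨⟨hq, -⟩, ht⟩, -, hs⟩ := And.imp mem_vertexIndices.mp mem_vertexIndices.mp (mem_edgeIndices.mp hp)
  refine mem_image.mpr ⟨(t, s), mem_product.mpr ⟨mem_range.mpr ht, mem_range.mpr hs⟩, ?_⟩
  have hq0 : (q : ℝ) ≠ 0 := by positivity
  simp only [leftVertex, rightVertex]
  field_simp

lemma rpow_natCast_div_pow {x : ℝ} (hx : 0 ≤ x) (p : ℕ) {q : ℕ} (hq : q ≠ 0) :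
    (x ^ ((p : ℝ) / q)) ^ q = x ^ p := by
  rw [← Real.rpow_natCast, ← Real.rpow_mul hx, div_mul_cancel₀ _ (Nat.cast_ne_zero.mpr hq),
    Real.rpow_natCast]

lemma rpow_natCast_div_le_of_pow_le {x y : ℝ} (hx : 0 ≤ x) (hy : 0 ≤ y) {p q : ℕ} (hq : q ≠ 0)
    (h : x ^ p ≤ y ^ q) : x ^ ((p : ℝ) / q) ≤ y := by
  rwa [← pow_le_pow_iff_left₀ (by positivity) hy hq, rpow_natCast_div_pow hx p hq]

lemma lt_rpow_natCast_div_of_pow_lt {x y : ℝ} (hx : 0 ≤ x) (hy : 0 ≤ y) {p q : ℕ} (hq : q ≠ 0)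
    (h : y ^ q < x ^ p) : y < x ^ ((p : ℝ) / q) := by
  rwa [← pow_lt_pow_iff_left₀ hy (by positivity) hq, rpow_natCast_div_pow hx p hq]

lemma rpow_le_ncard_edgeSet_graph {K : ℕ} (hK : 128 ≤ K) :
    ((2 * K * K ^ 4 : ℕ) : ℝ) ^ (1 + 3 / 4 : ℝ) ≤ (graph K (K ^ 4)).edgeSet.ncard := by
  have hpow : (2 * K * K ^ 4) ^ 7 ≤ (K * (K ^ 4) ^ 2) ^ 4 := calc
    (2 * K * K ^ 4) ^ 7 = 128 * K ^ 35 := by ring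
    _ ≤ K * K ^ 35 := Nat.mul_le_mul_right _ hK
    _ = (K * (K ^ 4) ^ 2) ^ 4 := by ring
  rw [show (1 + 3 / 4 : ℝ) = (7 : ℕ) / (4 : ℕ) by norm_num, ncard_edgeSet_graph]
  exact rpow_natCast_div_le_of_pow_le (by positivity) (by positivity) (by norm_num)
    (by exact_mod_cast hpow)

lemma ncard_sumsAlong_add_ncard_prodsAlong_graph_lt_rpow {K : ℕ} (hK : 0 < K) :
    ((sumsAlong (graph K (K ^ 4))).ncard + (prodsAlong (graph K (K ^ 4))).ncard : ℝ) <
      ((2 * K * K ^ 4 : ℕ) : ℝ) ^ (1 + 3 / 4 - 1 / 20 : ℝ) := by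
  have hsum : (sumsAlong (graph K (K ^ 4))).ncard + (prodsAlong (graph K (K ^ 4))).ncard
      ≤ K * (K ^ 2 + 1) * K ^ 4 + (K ^ 4) ^ 2 :=
    add_le_add ncard_sumsAlong_graph_le ncard_prodsAlong_graph_le
  have hpow : (K * (K ^ 2 + 1) * K ^ 4 + (K ^ 4) ^ 2) ^ 10 < (2 * K * K ^ 4) ^ 17 := calc
    (K * (K ^ 2 + 1) * K ^ 4 + (K ^ 4) ^ 2) ^ 10 = (K ^ 8 + K ^ 7 + K ^ 5) ^ 10 := by ring
    _ ≤ (3 * K ^ 8) ^ 10 := by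
      have h₅ : K ^ 5 ≤ K ^ 8 := Nat.pow_le_pow_right hK (by norm_num)
      have h₇ : K ^ 7 ≤ K ^ 8 := Nat.pow_le_pow_right hK (by norm_num)
      gcongr
      omega
    _ = 3 ^ 10 * K ^ 80 := by ring
    _ < 2 ^ 17 * K ^ 80 := by gcongr; norm_num
    _ ≤ 2 ^ 17 * K ^ 85 := by gcongr; omega
    _ = (2 * K * K ^ 4) ^ 17 := by ring
  rw [show (1 + 3 / 4 - 1 / 20 : ℝ) = (17 : ℕ) / (10 : ℕ) by norm_num]
  refine lt_rpow_natCast_div_of_pow_lt (by positivity) (by positivity) (by norm_num) ?_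
  exact_mod_cast (Nat.pow_le_pow_left hsum 10).trans_lt hpow

end ErdosSzemeredi

open ErdosSzemeredi in
/-- The Strong Erdős–Szemerédi Conjecture is false: there are `c, ε > 0` such that
for arbitrarily large `n` one can find an `n`-element set `𝒜 ⊂ ℝ` and a graph `G`
on `𝒜` with at least `n^{1+c}` edges for which
`|𝒜 +_G 𝒜| + |𝒜 ·_G 𝒜| < n^{1+c-ε}`. -/
theorem strong_erdos_szemeredi_false :
    ∃ c ε : ℝ, 0 < c ∧ 0 < ε ∧ ∀ n₀ : ℕ, ∃ n : ℕ, n₀ ≤ n ∧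
      ∃ (𝒜 : Finset ℝ) (G : SimpleGraph ℝ),
        𝒜.card = n ∧
        (∀ a b : ℝ, G.Adj a b → a ∈ 𝒜 ∧ b ∈ 𝒜) ∧
        (n : ℝ) ^ (1 + c) ≤ (G.edgeSet.ncard : ℝ) ∧
        ((sumsAlong G).ncard + (prodsAlong G).ncard : ℝ) < (n : ℝ) ^ (1 + c - ε) := by
  refine ⟨3 / 4, 1 / 20, by norm_num, by norm_num, fun n₀ => ?_⟩
  set K := max n₀ 128
  have hK : 128 ≤ K := le_max_right _ _
  refine ⟨2 * K * K ^ 4, ?_, vertices K (K ^ 4), graph K (K ^ 4), card_vertices,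
    fun a b => mem_vertices_of_adj_graph, rpow_le_ncard_edgeSet_graph hK,
    ncard_sumsAlong_add_ncard_prodsAlong_graph_lt_rpow (by omega)⟩
  calc n₀ ≤ K := le_max_left _ _
    _ ≤ 2 * K * K ^ 4 := by nlinarith [Nat.one_le_pow 4 K (by omega)]
end

section
/- Let s, t, u, v, w be pairwise distinct prime numbers and let s', t', u', v', w' be pairwise distinct prime numbers. If (s·u·√w)/(t·√v) = (s'·u'·√w')/(t'·√v') as real numbers, then v = v', w = w', t = t', and {s, u} = {s', u'} as sets. In particular, the map sending such a tuple to the real number (s·u·√w)/(t·√v) is injective up to exchanging the roles of s and u. -/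
set_option maxHeartbeats 1000000

/-- Injectivity of the representation `a = s·u·√w / (t·√v)` with `s,t,u,v,w`
pairwise distinct primes: equal real values force `v = v'`, `w = w'`, `t = t'`
and `{s, u} = {s', u'}`. -/
theorem representation_injective
    (s t u v w s' t' u' v' w' : ℕ)
    (hs : s.Prime) (ht : t.Prime) (hu : u.Prime) (hv : v.Prime) (hw : w.Prime)
    (hs' : s'.Prime) (ht' : t'.Prime) (hu' : u'.Prime) (hv' : v'.Prime) (hw' : w'.Prime)
    (hdist : ([s, t, u, v, w] : List ℕ).Nodup)
    (hdist' : ([s', t', u', v', w'] : List ℕ).Nodup)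
    (heq : (s * u : ℝ) * Real.sqrt w / (t * Real.sqrt v)
         = (s' * u' : ℝ) * Real.sqrt w' / (t' * Real.sqrt v')) :
    v = v' ∧ w = w' ∧ t = t' ∧ ({s, u} : Finset ℕ) = {s', u'} := by
  simp only [List.nodup_cons, List.mem_cons, List.not_mem_nil, or_false,
    List.mem_singleton, List.nodup_nil, and_true, not_or] at hdist hdist'
  obtain ⟨⟨hst, hsu, hsv, hsw⟩, ⟨htu, htv, htw⟩, ⟨huv, huw⟩, hvw, -⟩ := hdist
  obtain ⟨⟨pst, psu, psv, psw⟩, ⟨ptu, ptv, ptw⟩, ⟨puv, puw⟩, pvw, -⟩ := hdist'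
  -- Step 1: derive the squared natural-number equation
  have hv0 : (0:ℝ) < Real.sqrt v := Real.sqrt_pos.mpr (by exact_mod_cast hv.pos)
  have hv'0 : (0:ℝ) < Real.sqrt v' := Real.sqrt_pos.mpr (by exact_mod_cast hv'.pos)
  have htR : (0:ℝ) < t := by exact_mod_cast ht.pos
  have ht'R : (0:ℝ) < t' := by exact_mod_cast ht'.pos
  rw [div_eq_div_iff (by positivity) (by positivity)] at heq
  have hwR : Real.sqrt w * Real.sqrt w = (w:ℝ) := Real.mul_self_sqrt (Nat.cast_nonneg w)
  have hw'R : Real.sqrt w' * Real.sqrt w' = (w':ℝ) := Real.mul_self_sqrt (Nat.cast_nonneg w')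
  have hvR : Real.sqrt v * Real.sqrt v = (v:ℝ) := Real.mul_self_sqrt (Nat.cast_nonneg v)
  have hv'R : Real.sqrt v' * Real.sqrt v' = (v':ℝ) := Real.mul_self_sqrt (Nat.cast_nonneg v')
  have h2 : ((s:ℝ)*u * Real.sqrt w * ((t':ℝ) * Real.sqrt v')) * ((s:ℝ)*u * Real.sqrt w * ((t':ℝ) * Real.sqrt v'))
      = ((s':ℝ)*u' * Real.sqrt w' * ((t:ℝ) * Real.sqrt v)) * ((s':ℝ)*u' * Real.sqrt w' * ((t:ℝ) * Real.sqrt v)) := by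
    rw [heq]
  have hsqR : (((s:ℝ)*u)^2 * w * ((t':ℝ)^2*v') : ℝ) = (((s':ℝ)*u')^2 * w' * ((t:ℝ)^2*v) : ℝ) := by
    linear_combination h2 - ((s:ℝ)*u)^2*(t':ℝ)^2*(Real.sqrt v' * Real.sqrt v')*hwR
      - ((s:ℝ)*u)^2*(t':ℝ)^2*(w:ℝ)*hv'R + ((s':ℝ)*u')^2*(t:ℝ)^2*(Real.sqrt v * Real.sqrt v)*hw'R
      + ((s':ℝ)*u')^2*(t:ℝ)^2*(w':ℝ)*hvR
  have hN : (s*u)^2 * w * (t'^2*v') = (s'*u')^2 * w' * (t^2*v) := by exact_mod_cast hsqR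
  -- Step 2: prime-exponent identity
  have key : ∀ p, 2*(if s = p then 1 else 0) + 2*(if u = p then 1 else 0) + (if w = p then 1 else 0)
      + 2*(if t' = p then 1 else 0) + (if v' = p then 1 else 0)
      = 2*(if s' = p then 1 else 0) + 2*(if u' = p then 1 else 0) + (if w' = p then 1 else 0)
      + 2*(if t = p then 1 else 0) + (if v = p then 1 else 0) := by
    intro p
    have h := congrArg (fun n => n.factorization p) hN
    simp only [Nat.factorization_mul (mul_ne_zero (pow_ne_zero 2 (mul_ne_zero hs.ne_zero hu.ne_zero)) hw.ne_zero) (mul_ne_zero (pow_ne_zero 2 ht'.ne_zero) hv'.ne_zero),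
      Nat.factorization_mul (pow_ne_zero 2 (mul_ne_zero hs.ne_zero hu.ne_zero)) hw.ne_zero,
      Nat.factorization_mul (pow_ne_zero 2 ht'.ne_zero) hv'.ne_zero,
      Nat.factorization_mul (mul_ne_zero (pow_ne_zero 2 (mul_ne_zero hs'.ne_zero hu'.ne_zero)) hw'.ne_zero) (mul_ne_zero (pow_ne_zero 2 ht.ne_zero) hv.ne_zero),
      Nat.factorization_mul (pow_ne_zero 2 (mul_ne_zero hs'.ne_zero hu'.ne_zero)) hw'.ne_zero,
      Nat.factorization_mul (pow_ne_zero 2 ht.ne_zero) hv.ne_zero,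
      Nat.factorization_pow,
      Nat.factorization_mul hs.ne_zero hu.ne_zero,
      Nat.factorization_mul hs'.ne_zero hu'.ne_zero,
      hs.factorization, hu.factorization, hw.factorization, ht'.factorization, hv'.factorization,
      hs'.factorization, hu'.factorization, hw'.factorization, ht.factorization, hv.factorization,
      Finsupp.coe_add, Pi.add_apply, Finsupp.coe_smul, Finsupp.smul_apply, Pi.smul_apply,
      smul_eq_mul, Finsupp.single_apply] at h
    omega
  -- Step 3: rule out the swapped case, concluding w = w'
  have hww' : w = w' := by
    rcases eq_or_ne w w' with h1 | h1
    · exact h1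
    · exfalso
      -- First: v' = w
      have hv'w : v' = w := by
        rcases eq_or_ne v' w with h3 | h3
        · exact h3
        · exfalso
          have h := key w
          rw [if_neg hsw, if_neg huw, if_pos rfl, if_neg h3, if_neg (Ne.symm h1),
            if_neg hvw] at h
          split_ifs at h <;> omega
      -- Second: w' = v
      have hw'v : w' = v := by
        rcases eq_or_ne w' v with h3 | h3
        · exact h3
        · exfalso
          have h := key v
          have hv'v : ¬ (v' = v) := by rw [hv'w]; exact Ne.symm hvw
          rw [if_neg hsv, if_neg huv, if_neg (Ne.symm hvw), if_neg hv'v, if_neg h3,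
            if_neg htv, if_pos rfl] at h
          split_ifs at h <;> omega
      rw [hv'w, hw'v] at hN
      rw [hv'w] at psv puv ptv
      -- Now hN reads (su)²w t'²w = (s'u')²v t²v, so s·u·t'·w = s'·u'·t·v
      have hsq2 : (s*u*t'*w)^2 = (s'*u'*t*v)^2 := by
        calc (s*u*t'*w)^2 = (s*u)^2 * w * (t'^2*w) := by ring
        _ = (s'*u')^2 * v * (t^2*v) := hN
        _ = (s'*u'*t*v)^2 := by ring
      have hprod : s*u*t'*w = s'*u'*t*v := Nat.pow_left_injective (by norm_num) hsq2
      have key2 : ∀ p, (if s = p then 1 else 0) + (if u = p then 1 else 0) + (if t' = p then 1 else 0)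
          + (if w = p then 1 else 0)
          = (if s' = p then 1 else 0) + (if u' = p then 1 else 0) + (if t = p then 1 else 0)
          + (if v = p then 1 else 0) := by
        intro p
        have h := congrArg (fun n => n.factorization p) hprod
        simp only [Nat.factorization_mul (mul_ne_zero (mul_ne_zero hs.ne_zero hu.ne_zero) ht'.ne_zero) hw.ne_zero,
          Nat.factorization_mul (mul_ne_zero hs.ne_zero hu.ne_zero) ht'.ne_zero,
          Nat.factorization_mul hs.ne_zero hu.ne_zero,
          Nat.factorization_mul (mul_ne_zero (mul_ne_zero hs'.ne_zero hu'.ne_zero) ht.ne_zero) hv.ne_zero,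
          Nat.factorization_mul (mul_ne_zero hs'.ne_zero hu'.ne_zero) ht.ne_zero,
          Nat.factorization_mul hs'.ne_zero hu'.ne_zero,
          hs.factorization, hu.factorization, hw.factorization, ht'.factorization,
          hs'.factorization, hu'.factorization, ht.factorization, hv.factorization,
          Finsupp.coe_add, Pi.add_apply, Finsupp.single_apply] at h
        omega
      -- at p = w: left side ≥ 1, right side = 0
      have h := key2 w
      rw [if_neg hsw, if_neg huw, if_neg ptv, if_pos rfl, if_neg psv,
        if_neg puv, if_neg htw, if_neg hvw] at h
      omega
  subst hww'
  -- Step 4: v = v'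
  have hvv' : v = v' := by
    rcases eq_or_ne v v' with h3 | h3
    · exact h3
    · exfalso
      have h := key v
      rw [if_neg hsv, if_neg huv, if_neg (Ne.symm hvw), if_neg (Ne.symm h3),
        if_neg htv, if_pos rfl] at h
      split_ifs at h <;> omega
  subst hvv'
  -- Step 5: cancel to get s·u·t' = s'·u'·t
  have hsq3 : (s*u*t')^2 * (w*v) = (s'*u'*t)^2 * (w*v) := by
    calc (s*u*t')^2 * (w*v) = (s*u)^2 * w * (t'^2*v) := by ring
    _ = (s'*u')^2 * w * (t^2*v) := hN
    _ = (s'*u'*t)^2 * (w*v) := by ring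
  have hprod : s*u*t' = s'*u'*t := by
    have h2 : (s*u*t')^2 = (s'*u'*t)^2 :=
      Nat.eq_of_mul_eq_mul_right (Nat.mul_pos hw.pos hv.pos) hsq3
    exact Nat.pow_left_injective (by norm_num) h2
  have key3 : ∀ p, (if s = p then 1 else 0) + (if u = p then 1 else 0) + (if t' = p then 1 else 0)
      = (if s' = p then 1 else 0) + (if u' = p then 1 else 0) + (if t = p then 1 else 0) := by
    intro p
    have h := congrArg (fun n => n.factorization p) hprod
    simp only [Nat.factorization_mul (mul_ne_zero hs.ne_zero hu.ne_zero) ht'.ne_zero,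
      Nat.factorization_mul hs.ne_zero hu.ne_zero,
      Nat.factorization_mul (mul_ne_zero hs'.ne_zero hu'.ne_zero) ht.ne_zero,
      Nat.factorization_mul hs'.ne_zero hu'.ne_zero,
      hs.factorization, hu.factorization, ht'.factorization,
      hs'.factorization, hu'.factorization, ht.factorization,
      Finsupp.coe_add, Pi.add_apply, Finsupp.single_apply] at h
    omega
  -- Step 6: t = t'
  have htt' : t = t' := by
    rcases eq_or_ne t t' with h3 | h3
    · exact h3
    · exfalso
      have h := key3 t
      rw [if_neg hst, if_neg (Ne.symm htu), if_neg (Ne.symm h3), if_pos rfl] at h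
      split_ifs at h <;> omega
  subst htt'
  refine ⟨rfl, rfl, rfl, ?_⟩
  -- Step 7: {s, u} = {s', u'}
  have key4 : ∀ p, (if s = p then 1 else 0) + (if u = p then 1 else 0)
      = (if s' = p then 1 else 0) + (if u' = p then 1 else 0) := by
    intro p
    have h := key3 p
    split_ifs at h ⊢ <;> omega
  rcases eq_or_ne s s' with h4 | h4
  · subst h4
    have huu' : u = u' := by
      rcases eq_or_ne u u' with h5 | h5
      · exact h5
      · exfalso
        have h := key4 u
        rw [if_neg hsu, if_pos rfl, if_neg (Ne.symm h5)] at h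
        omega
    subst huu'
    rfl
  · have hu's : u' = s := by
      rcases eq_or_ne u' s with h5 | h5
      · exact h5
      · exfalso
        have h := key4 s
        rw [if_pos rfl, if_neg (Ne.symm hsu), if_neg (Ne.symm h4), if_neg h5] at h
        omega
    have hs'u : s' = u := by
      rcases eq_or_ne s' u with h5 | h5
      · exact h5
      · exfalso
        have h := key4 u
        have : ¬ (u' = u) := by rw [hu's]; exact hsu
        rw [if_neg hsu, if_pos rfl, if_neg h5, if_neg this] at h
        omega
    subst hu's; subst hs'u
    exact Finset.pair_comm u' s'
end
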